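/- arXiv:2604.26088 — 6 statements merged into one kernel-verified Lean document; each statement's English description precedes it below -/
import Mathlib

section
/- Fix u ∈ ℝ, c ≥ 0, b ≥ 0. Suppose the quantity D := ∫₀^∞ g_{v|e}(u+e,e)·g_e(e) de − c·∫₀^∞ g_{v|e}(u+e,e) de − b is strictly positive and that ∫₀^∞ f_{v|e}(u+e,e)·f_e(e) de > 0. Then the posterior expectation ratio (∫₀^∞ e^{−e}·f_{v|e}(u+e,e)·f_e(e) de) / (∫₀^∞ f_{v|e}(u+e,e)·f_e(e) de) is bounded above by ( ∫₀^∞ e^{−e}·g_{v|e}(u+e,e)·g_e(e) de + c·∫₀^∞ e^{−e}·g_{v|e}(u+e,e) de + b·∫₀^∞ e^{−e}·g_e(e) de + b·c ) / D. -/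
open MeasureTheory Set

/-- Lemma 1 (upper bound of the identified set): under the parametric-distance
relaxation of the Stochastic Frontier assumptions, the average efficiency
`E[exp(-e) | v - e = u]` is bounded above. -/
theorem stmt_0
    (u c b : ℝ) (hc : 0 ≤ c) (hb : 0 ≤ b)
    (fe ge : ℝ → ℝ) (fv gv : ℝ → ℝ → ℝ)
    (hfe_meas : Measurable fe) (hge_meas : Measurable ge)
    (hfv_meas : Measurable (Function.uncurry fv))
    (hgv_meas : Measurable (Function.uncurry gv))
    (hfe_nonneg : ∀ e, 0 ≤ e → 0 ≤ fe e)
    (hge_nonneg : ∀ e, 0 ≤ e → 0 ≤ ge e)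
    (hfv_nonneg : ∀ v e, 0 ≤ e → 0 ≤ fv v e)
    (hgv_nonneg : ∀ v e, 0 ≤ e → 0 ≤ gv v e)
    (hfe_int : ∫ e in Ioi (0:ℝ), fe e = 1)
    (h_close_e : ∀ e, 0 ≤ e → |fe e - ge e| ≤ c)
    (h_close_v : ∀ v e, 0 ≤ e → |fv v e - gv v e| ≤ b)
    (hint1 : IntegrableOn (fun e => Real.exp (-e) * fv (u + e) e * fe e) (Ioi 0))
    (hint2 : IntegrableOn (fun e => fv (u + e) e * fe e) (Ioi 0))
    (hint3 : IntegrableOn (fun e => Real.exp (-e) * gv (u + e) e * ge e) (Ioi 0))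
    (hint4 : IntegrableOn (fun e => Real.exp (-e) * gv (u + e) e) (Ioi 0))
    (hint5 : IntegrableOn (fun e => Real.exp (-e) * ge e) (Ioi 0))
    (hint6 : IntegrableOn (fun e => gv (u + e) e * ge e) (Ioi 0))
    (hint7 : IntegrableOn (fun e => gv (u + e) e) (Ioi 0))
    (hD : 0 < (∫ e in Ioi (0:ℝ), gv (u + e) e * ge e)
        - c * (∫ e in Ioi (0:ℝ), gv (u + e) e) - b)
    (hpos : 0 < ∫ e in Ioi (0:ℝ), fv (u + e) e * fe e) :
    (∫ e in Ioi (0:ℝ), Real.exp (-e) * fv (u + e) e * fe e)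
      / (∫ e in Ioi (0:ℝ), fv (u + e) e * fe e)
    ≤ ((∫ e in Ioi (0:ℝ), Real.exp (-e) * gv (u + e) e * ge e)
        + c * (∫ e in Ioi (0:ℝ), Real.exp (-e) * gv (u + e) e)
        + b * (∫ e in Ioi (0:ℝ), Real.exp (-e) * ge e) + b * c)
      / ((∫ e in Ioi (0:ℝ), gv (u + e) e * ge e)
        - c * (∫ e in Ioi (0:ℝ), gv (u + e) e) - b) := by
  have hexp_int : IntegrableOn (fun e => Real.exp (-e)) (Ioi (0:ℝ)) := by
    simpa using exp_neg_integrableOn_Ioi (0:ℝ) one_pos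
  have hfe_intg : IntegrableOn fe (Ioi (0:ℝ)) := by
    by_contra h
    rw [MeasureTheory.integral_undef h] at hfe_int
    norm_num at hfe_int
  -- pointwise bounds
  have hfv_le : ∀ e ∈ Ioi (0:ℝ), fv (u + e) e ≤ gv (u + e) e + b := fun e he => by
    have := (abs_sub_le_iff.mp (h_close_v (u + e) e (le_of_lt he))).1; linarith
  have hfv_ge : ∀ e ∈ Ioi (0:ℝ), gv (u + e) e - b ≤ fv (u + e) e := fun e he => by
    have := (abs_sub_le_iff.mp (h_close_v (u + e) e (le_of_lt he))).2; linarith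
  have hfe_le : ∀ e ∈ Ioi (0:ℝ), fe e ≤ ge e + c := fun e he => by
    have := (abs_sub_le_iff.mp (h_close_e e (le_of_lt he))).1; linarith
  have hfe_ge : ∀ e ∈ Ioi (0:ℝ), ge e - c ≤ fe e := fun e he => by
    have := (abs_sub_le_iff.mp (h_close_e e (le_of_lt he))).2; linarith
  set Nf := ∫ e in Ioi (0:ℝ), Real.exp (-e) * fv (u + e) e * fe e with hNf
  set Df := ∫ e in Ioi (0:ℝ), fv (u + e) e * fe e with hDf
  set M := (∫ e in Ioi (0:ℝ), Real.exp (-e) * gv (u + e) e * ge e)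
        + c * (∫ e in Ioi (0:ℝ), Real.exp (-e) * gv (u + e) e)
        + b * (∫ e in Ioi (0:ℝ), Real.exp (-e) * ge e) + b * c with hM
  set D := (∫ e in Ioi (0:ℝ), gv (u + e) e * ge e)
        - c * (∫ e in Ioi (0:ℝ), gv (u + e) e) - b with hD'
  -- numerator bound
  have hintR : IntegrableOn (fun e => Real.exp (-e) * gv (u + e) e * ge e
      + c * (Real.exp (-e) * gv (u + e) e) + b * (Real.exp (-e) * ge e)
      + (b * c) * Real.exp (-e)) (Ioi (0:ℝ)) :=
    ((hint3.add (hint4.const_mul c)).add (hint5.const_mul b)).add (hexp_int.const_mul (b*c))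
  have iA : IntegrableOn (fun e => Real.exp (-e) * gv (u + e) e * ge e
      + c * (Real.exp (-e) * gv (u + e) e)) (Ioi (0:ℝ)) := hint3.add (hint4.const_mul c)
  have iB : IntegrableOn (fun e => Real.exp (-e) * gv (u + e) e * ge e
      + c * (Real.exp (-e) * gv (u + e) e) + b * (Real.exp (-e) * ge e)) (Ioi (0:ℝ)) :=
    iA.add (hint5.const_mul b)
  have iC : IntegrableOn (fun e => (b * c) * Real.exp (-e)) (Ioi (0:ℝ)) :=
    hexp_int.const_mul (b*c)
  have iD5 : IntegrableOn (fun e => b * (Real.exp (-e) * ge e)) (Ioi (0:ℝ)) :=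
    hint5.const_mul b
  have iD4 : IntegrableOn (fun e => c * (Real.exp (-e) * gv (u + e) e)) (Ioi (0:ℝ)) :=
    hint4.const_mul c
  have jA : IntegrableOn (fun e => gv (u + e) e * ge e - c * gv (u + e) e) (Ioi (0:ℝ)) :=
    hint6.sub (hint7.const_mul c)
  have j7 : IntegrableOn (fun e => c * gv (u + e) e) (Ioi (0:ℝ)) := hint7.const_mul c
  have jB : IntegrableOn (fun e => b * fe e) (Ioi (0:ℝ)) := hfe_intg.const_mul b
  have hnum : Nf ≤ M := by
    have h1 : Nf ≤ ∫ e in Ioi (0:ℝ), (Real.exp (-e) * gv (u + e) e * ge e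
        + c * (Real.exp (-e) * gv (u + e) e) + b * (Real.exp (-e) * ge e)
        + (b * c) * Real.exp (-e)) := by
      refine setIntegral_mono_on hint1 hintR measurableSet_Ioi (fun e he => ?_)
      have h0 : (0:ℝ) < e := he
      have hge := hge_nonneg e h0.le
      have hgv := hgv_nonneg (u + e) e h0.le
      have hfe' := hfe_nonneg e h0.le
      have hfv' := hfv_nonneg (u + e) e h0.le
      have hex : (0:ℝ) ≤ Real.exp (-e) := (Real.exp_pos _).le
      have key : fv (u + e) e * fe e ≤ (gv (u + e) e + b) * (ge e + c) :=
        mul_le_mul (hfv_le e he) (hfe_le e he) hfe' (by linarith [hgv])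
      nlinarith [mul_le_mul_of_nonneg_left key hex]
    have h2 : (∫ e in Ioi (0:ℝ), (Real.exp (-e) * gv (u + e) e * ge e
        + c * (Real.exp (-e) * gv (u + e) e) + b * (Real.exp (-e) * ge e)
        + (b * c) * Real.exp (-e))) = M := by
      rw [integral_add iB iC, integral_add iA iD5, integral_add hint3 iD4,
        MeasureTheory.integral_const_mul, MeasureTheory.integral_const_mul,
        MeasureTheory.integral_const_mul, integral_exp_neg_Ioi_zero, hM]
      ring
    linarith
  -- denominator bound
  have hintL : IntegrableOn (fun e => gv (u + e) e * ge e - c * gv (u + e) e - b * fe e)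
      (Ioi (0:ℝ)) := (hint6.sub (hint7.const_mul c)).sub (hfe_intg.const_mul b)
  have hden : D ≤ Df := by
    have h1 : (∫ e in Ioi (0:ℝ), (gv (u + e) e * ge e - c * gv (u + e) e - b * fe e)) ≤ Df := by
      refine setIntegral_mono_on hintL hint2 measurableSet_Ioi (fun e he => ?_)
      have h0 : (0:ℝ) < e := he
      have hgv := hgv_nonneg (u + e) e h0.le
      have hfe' := hfe_nonneg e h0.le
      have k1 : gv (u + e) e * (ge e - c) ≤ gv (u + e) e * fe e :=
        mul_le_mul_of_nonneg_left (hfe_ge e he) hgv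
      have k2 : (gv (u + e) e - b) * fe e ≤ fv (u + e) e * fe e :=
        mul_le_mul_of_nonneg_right (hfv_ge e he) hfe'
      nlinarith
    have h2 : (∫ e in Ioi (0:ℝ), (gv (u + e) e * ge e - c * gv (u + e) e - b * fe e)) = D := by
      rw [integral_sub jA jB, integral_sub hint6 j7,
        MeasureTheory.integral_const_mul, MeasureTheory.integral_const_mul, hfe_int, hD']
      ring
    linarith
  -- nonnegativity
  have hNf0 : 0 ≤ Nf := by
    refine setIntegral_nonneg measurableSet_Ioi (fun e he => ?_)
    have h0 : (0:ℝ) < e := he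
    exact mul_nonneg (mul_nonneg (Real.exp_pos _).le (hfv_nonneg (u + e) e h0.le))
      (hfe_nonneg e h0.le)
  have hM0 : 0 ≤ M := le_trans hNf0 hnum
  rw [div_le_div_iff₀ hpos hD]
  calc Nf * D ≤ M * D := mul_le_mul_of_nonneg_right hnum hD.le
    _ ≤ M * Df := mul_le_mul_of_nonneg_left hden hM0
end

section
/- Fix u ∈ ℝ, c ≥ 0, b ≥ 0, and e₀ ≥ 0. Suppose D := ∫₀^∞ g_{v|e}(u+e',e')·g_e(e') de' − c·∫₀^∞ g_{v|e}(u+e',e') de' − b > 0. Then for every e ≥ 0, the posterior density value f_{v|e}(u+e,e)·f_e(e) / (∫₀^∞ f_{v|e}(u+e',e')·f_e(e') de') is bounded above by (g_{v|e}(u+e,e) + b)·(g_e(e) + c) / D, provided ∫₀^∞ f_{v|e}(u+e',e')·f_e(e') de' > 0. -/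
open MeasureTheory Set

/-- Upper bound of Equation (EqBP4) in the proof of Lemma 1: the conditional
(posterior) density of the inefficiency `e` given the composite error
`u = v - e` is bounded above. -/
theorem stmt_6
    (u c b e₀ : ℝ) (hc : 0 ≤ c) (hb : 0 ≤ b) (he₀ : 0 ≤ e₀)
    (fe ge : ℝ → ℝ) (fv gv : ℝ → ℝ → ℝ)
    (hfe_meas : Measurable fe) (hge_meas : Measurable ge)
    (hfv_meas : Measurable (Function.uncurry fv))
    (hgv_meas : Measurable (Function.uncurry gv))
    (hfe_nonneg : ∀ e, 0 ≤ e → 0 ≤ fe e)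
    (hge_nonneg : ∀ e, 0 ≤ e → 0 ≤ ge e)
    (hfv_nonneg : ∀ v e, 0 ≤ e → 0 ≤ fv v e)
    (hgv_nonneg : ∀ v e, 0 ≤ e → 0 ≤ gv v e)
    (hfe_int : ∫ e in Ioi (0:ℝ), fe e = 1)
    (h_close_e : ∀ e, 0 ≤ e → |fe e - ge e| ≤ c)
    (h_close_v : ∀ v e, 0 ≤ e → |fv v e - gv v e| ≤ b)
    (hint1 : IntegrableOn (fun e' => fv (u + e') e' * fe e') (Ioi 0))
    (hint2 : IntegrableOn (fun e' => gv (u + e') e' * ge e') (Ioi 0))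
    (hint3 : IntegrableOn (fun e' => gv (u + e') e') (Ioi 0))
    (hD : 0 < (∫ e' in Ioi (0:ℝ), gv (u + e') e' * ge e')
        - c * (∫ e' in Ioi (0:ℝ), gv (u + e') e') - b)
    (hpos : 0 < ∫ e' in Ioi (0:ℝ), fv (u + e') e' * fe e') :
    ∀ e, 0 ≤ e →
      fv (u + e) e * fe e / (∫ e' in Ioi (0:ℝ), fv (u + e') e' * fe e')
      ≤ (gv (u + e) e + b) * (ge e + c)
        / ((∫ e' in Ioi (0:ℝ), gv (u + e') e' * ge e')
            - c * (∫ e' in Ioi (0:ℝ), gv (u + e') e') - b) := by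
  intro e he
  -- integrability of fe on Ioi 0
  have hfe_integrable : IntegrableOn fe (Ioi (0:ℝ)) := by
    by_contra h
    rw [integral_undef h] at hfe_int
    norm_num at hfe_int
  set D := (∫ e' in Ioi (0:ℝ), gv (u + e') e' * ge e')
      - c * (∫ e' in Ioi (0:ℝ), gv (u + e') e') - b with hDdef
  -- denominator lower bound
  have hden : D ≤ ∫ e' in Ioi (0:ℝ), fv (u + e') e' * fe e' := by
    have h1 : ∫ e' in Ioi (0:ℝ),
        (gv (u + e') e' * ge e' - c * gv (u + e') e' - b * fe e')
        ≤ ∫ e' in Ioi (0:ℝ), fv (u + e') e' * fe e' := by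
      apply setIntegral_mono_on
      · exact (hint2.sub (hint3.const_mul c)).sub (hfe_integrable.const_mul b)
      · exact hint1
      · exact measurableSet_Ioi
      · intro x hx
        have hx' : (0:ℝ) ≤ x := le_of_lt hx
        have hfv := hfv_nonneg (u + x) x hx'
        have hgv := hgv_nonneg (u + x) x hx'
        have hfe := hfe_nonneg x hx'
        have h1 := abs_le.mp (h_close_e x hx')
        have h2 := abs_le.mp (h_close_v (u + x) x hx')
        nlinarith [h1.1, h1.2, h2.1, h2.2]
    have h2 : ∫ e' in Ioi (0:ℝ),
        (gv (u + e') e' * ge e' - c * gv (u + e') e' - b * fe e')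
        = (∫ e' in Ioi (0:ℝ), gv (u + e') e' * ge e')
          - c * (∫ e' in Ioi (0:ℝ), gv (u + e') e')
          - b * (∫ e' in Ioi (0:ℝ), fe e') := by
      have ia : IntegrableOn (fun e' => gv (u + e') e' * ge e' - c * gv (u + e') e')
          (Ioi (0:ℝ)) := hint2.sub (hint3.const_mul c)
      have ib : IntegrableOn (fun e' => b * fe e') (Ioi (0:ℝ)) :=
        hfe_integrable.const_mul b
      have ic : IntegrableOn (fun e' => c * gv (u + e') e') (Ioi (0:ℝ)) :=
        hint3.const_mul c
      rw [integral_sub ia ib, integral_sub hint2 ic, MeasureTheory.integral_const_mul, MeasureTheory.integral_const_mul]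
    rw [h2, hfe_int, mul_one] at h1
    exact h1
  -- numerator upper bound
  have hnum : fv (u + e) e * fe e ≤ (gv (u + e) e + b) * (ge e + c) := by
    have h1 := abs_le.mp (h_close_e e he)
    have h2 := abs_le.mp (h_close_v (u + e) e he)
    have hfv := hfv_nonneg (u + e) e he
    have hfe := hfe_nonneg e he
    have hgv := hgv_nonneg (u + e) e he
    have hge := hge_nonneg e he
    nlinarith [h1.1, h1.2, h2.1, h2.2]
  have hnum' : 0 ≤ (gv (u + e) e + b) * (ge e + c) := by
    have := hgv_nonneg (u + e) e he
    have := hge_nonneg e he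
    positivity
  exact div_le_div₀ hnum' hnum hD hden
end

section
/- Let b ∈ ℝ, let (ρ_n) be a sequence of positive reals with ρ_n → ∞, and let (b_n) be a sequence of reals such that ρ_n·(b_n − b) → 0 as n → ∞. Then b_n·e^{ρ_n b_n} / (1 + e^{ρ_n b_n}) → max(0, b) as n → ∞. -/
open Filter

private lemma sig_atTop : Tendsto (fun x : ℝ => Real.exp x / (1 + Real.exp x)) atTop (nhds 1) := by
  have h : ∀ x : ℝ, Real.exp x / (1 + Real.exp x) = (Real.exp (-x) + 1)⁻¹ := by
    intro x
    rw [Real.exp_neg]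
    have hx := (Real.exp_pos x).ne'
    field_simp
  simp only [h]
  have hexp : Tendsto (fun x : ℝ => Real.exp (-x)) atTop (nhds 0) :=
    Real.tendsto_exp_atBot.comp tendsto_neg_atTop_atBot
  have h1 : Tendsto (fun x : ℝ => Real.exp (-x) + 1) atTop (nhds (0 + 1)) :=
    hexp.add tendsto_const_nhds
  have := h1.inv₀ (by norm_num)
  simpa using this

private lemma sig_atBot : Tendsto (fun x : ℝ => Real.exp x / (1 + Real.exp x)) atBot (nhds 0) := by
  have hexp : Tendsto (fun x : ℝ => Real.exp x) atBot (nhds 0) := Real.tendsto_exp_atBot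
  have h1 : Tendsto (fun x : ℝ => 1 + Real.exp x) atBot (nhds (1 + 0)) :=
    tendsto_const_nhds.add hexp
  have := hexp.div h1 (by norm_num)
  rw [add_zero, zero_div] at this
  exact this

/-- Deterministic content of Lemma 2 (consistency of the smoothed breakdown
frontier estimator): if `ρ_n → ∞` and `ρ_n (b_n - b) → 0`, then the smoothed
estimator `b_n e^{ρ_n b_n}/(1 + e^{ρ_n b_n})` converges to `max 0 b`. -/
theorem stmt_15 (b : ℝ) (ρ : ℕ → ℝ) (hρ_pos : ∀ n, 0 < ρ n)
    (hρ_top : Tendsto ρ atTop atTop) (bn : ℕ → ℝ)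
    (hslow : Tendsto (fun n => ρ n * (bn n - b)) atTop (nhds 0)) :
    Tendsto
      (fun n => bn n * Real.exp (ρ n * bn n) / (1 + Real.exp (ρ n * bn n)))
      atTop (nhds (max 0 b)) := by
  -- b_n → b
  have hinv : Tendsto (fun n => (ρ n)⁻¹) atTop (nhds 0) := hρ_top.inv_tendsto_atTop
  have hbb : Tendsto bn atTop (nhds b) := by
    have h1 : Tendsto (fun n => ρ n * (bn n - b) * (ρ n)⁻¹) atTop (nhds 0) := by
      simpa using hslow.mul hinv
    have h2 : (fun n => ρ n * (bn n - b) * (ρ n)⁻¹) = fun n => bn n - b := by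
      funext n
      field_simp [(hρ_pos n).ne']
    rw [h2] at h1
    have := h1.add (tendsto_const_nhds (x := b))
    simpa using this
  have key : ∀ n, bn n * Real.exp (ρ n * bn n) / (1 + Real.exp (ρ n * bn n))
      = bn n * (Real.exp (ρ n * bn n) / (1 + Real.exp (ρ n * bn n))) := by
    intro n; rw [mul_div_assoc]
  simp only [key]
  rcases lt_trichotomy b 0 with hb | hb | hb
  · -- b < 0 : exponent → -∞, sigmoid → 0, limit = 0 = max 0 b
    have hx : Tendsto (fun n => ρ n * bn n) atTop atBot := by
      have h1 : Tendsto (fun n => ρ n * b) atTop atBot := hρ_top.atTop_mul_const_of_neg hb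
      have h2 : Tendsto (fun n => ρ n * (bn n - b) + ρ n * b) atTop atBot :=
        hslow.add_atBot h1
      have : (fun n => ρ n * (bn n - b) + ρ n * b) = fun n => ρ n * bn n := by
        funext n; ring
      rwa [this] at h2
    have hs := sig_atBot.comp hx
    have := hbb.mul hs
    simpa [max_eq_left hb.le] using this
  · -- b = 0 : exponent → 0, sigmoid → 1/2, limit = 0
    subst hb
    have hx : Tendsto (fun n => ρ n * bn n) atTop (nhds 0) := by
      simpa using hslow
    have hexp : Tendsto (fun n => Real.exp (ρ n * bn n)) atTop (nhds 1) := by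
      have := Real.continuous_exp.continuousAt.tendsto.comp hx
      rw [Real.exp_zero] at this
      exact this
    have hs : Tendsto (fun n => Real.exp (ρ n * bn n) / (1 + Real.exp (ρ n * bn n)))
        atTop (nhds (1 / (1 + 1))) :=
      hexp.div ((tendsto_const_nhds : Tendsto (fun _ : ℕ => (1:ℝ)) atTop (nhds 1)).add hexp)
        (by norm_num)
    have := hbb.mul hs
    simpa using this
  · -- b > 0 : exponent → ∞, sigmoid → 1, limit = b
    have hx : Tendsto (fun n => ρ n * bn n) atTop atTop := by
      have h1 : Tendsto (fun n => ρ n * b) atTop atTop := hρ_top.atTop_mul_const hb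
      have h2 : Tendsto (fun n => ρ n * (bn n - b) + ρ n * b) atTop atTop :=
        hslow.add_atTop h1
      have : (fun n => ρ n * (bn n - b) + ρ n * b) = fun n => ρ n * bn n := by
        funext n; ring
      rwa [this] at h2
    have hs := sig_atTop.comp hx
    have := hbb.mul hs
    simpa [max_eq_right hb.le] using this
end

section
/- Let (Ω, 𝓕, P) be a probability space, let b ∈ ℝ, let (ρ_n) be a sequence of positive reals with ρ_n → ∞, and let (b̂_n) be a sequence of real-valued random variables on Ω such that ρ_n·(b̂_n − b) → 0 in probability. Then the random variables b̂_n·e^{ρ_n b̂_n} / (1 + e^{ρ_n b̂_n}) converge in probability to the constant max(0, b). -/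
open Filter MeasureTheory

private lemma sig_nonneg (t : ℝ) : 0 ≤ Real.exp t / (1 + Real.exp t) :=
  div_nonneg (Real.exp_pos t).le (by positivity)

private lemma sig_le_one (t : ℝ) : Real.exp t / (1 + Real.exp t) ≤ 1 := by
  rw [div_le_one (by positivity)]; linarith [Real.exp_pos t]

private lemma sig_le_exp (t : ℝ) : Real.exp t / (1 + Real.exp t) ≤ Real.exp t := by
  rw [div_le_iff₀ (by positivity)]
  nlinarith [Real.exp_pos t]

private lemma one_sub_sig_le (t : ℝ) : 1 - Real.exp t / (1 + Real.exp t) ≤ Real.exp (-t) := by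
  have h1 : (0:ℝ) < 1 + Real.exp t := by positivity
  have h2 : 1 - Real.exp t / (1 + Real.exp t) = 1 / (1 + Real.exp t) := by field_simp; ring
  rw [h2, Real.exp_neg, ← one_div]
  exact one_div_le_one_div_of_le (Real.exp_pos t) (by linarith)

private lemma key (b : ℝ) (ρ : ℕ → ℝ) (hρ_pos : ∀ n, 0 < ρ n)
    (hρ_top : Tendsto ρ atTop atTop) {ε : ℝ} (hε : 0 < ε) :
    ∀ᶠ n in atTop, ∀ x : ℝ, |ρ n * (x - b)| < 1 →
      |x * Real.exp (ρ n * x) / (1 + Real.exp (ρ n * x)) - max 0 b| < ε := by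
  have hinv : Tendsto (fun n => 1 / ρ n) atTop (nhds 0) := by
    exact hρ_top.inv_tendsto_atTop.congr (fun n => by simp [one_div])
  rcases lt_trichotomy b 0 with hb | hb | hb
  · -- b < 0
    have hm : max 0 b = 0 := max_eq_left hb.le
    have hexp : Tendsto (fun n => Real.exp (ρ n * b + 1)) atTop (nhds 0) := by
      apply Real.tendsto_exp_atBot.comp
      have : Tendsto (fun n => ρ n * b) atTop atBot := hρ_top.atTop_mul_const_of_neg hb
      exact tendsto_atBot_add_const_right _ 1 this
    have hB : Tendsto (fun n => (-b + 1 / ρ n) * Real.exp (ρ n * b + 1)) atTop (nhds 0) := by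
      have := ((tendsto_const_nhds (x := -b)).add hinv).mul hexp
      simpa using this
    filter_upwards [hB.eventually (gt_mem_nhds hε)] with n hBn x hy
    set t := ρ n * x with ht
    have hρn := hρ_pos n
    have hxb : |x - b| ≤ 1 / ρ n := by
      rw [le_div_iff₀ hρn]
      calc |x - b| * ρ n = |ρ n * (x - b)| := by
            rw [abs_mul, abs_of_pos hρn]; ring
        _ ≤ 1 := hy.le
    have hx : |x| ≤ -b + 1 / ρ n := by
      have := abs_sub_abs_le_abs_sub x b
      have hab : |b| = -b := abs_of_neg hb
      linarith
    have htle : t ≤ ρ n * b + 1 := by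
      have : ρ n * (x - b) ≤ |ρ n * (x - b)| := le_abs_self _
      have := this.trans hy.le
      nlinarith
    have hexpt : Real.exp t ≤ Real.exp (ρ n * b + 1) := Real.exp_le_exp.2 htle
    rw [hm, sub_zero, mul_div_assoc, abs_mul]
    have hs0 := sig_nonneg t
    have hs1 := sig_le_exp t
    have habs : |Real.exp t / (1 + Real.exp t)| = Real.exp t / (1 + Real.exp t) :=
      abs_of_nonneg hs0
    rw [habs]
    have h1 : |x| * (Real.exp t / (1 + Real.exp t)) ≤ (-b + 1 / ρ n) * Real.exp (ρ n * b + 1) := by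
      have hb' : (0:ℝ) ≤ -b + 1 / ρ n := by
        have : (0:ℝ) < 1 / ρ n := by positivity
        linarith
      nlinarith [abs_nonneg x, Real.exp_pos (ρ n * b + 1)]
    linarith
  · -- b = 0
    subst hb
    filter_upwards [hρ_top.eventually_gt_atTop (1 / ε)] with n hn x hy
    have hρn := hρ_pos n
    have hx : |x| ≤ 1 / ρ n := by
      rw [le_div_iff₀ hρn]
      calc |x| * ρ n = |ρ n * (x - 0)| := by rw [abs_mul, abs_of_pos hρn]; ring_nf
        _ ≤ 1 := hy.le
    set t := ρ n * x
    rw [max_self, sub_zero, mul_div_assoc, abs_mul,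
      abs_of_nonneg (sig_nonneg t)]
    have h1 : 1 / ρ n < ε := by
      rw [div_lt_iff₀ hρn]
      have : 1 / ε < ρ n := hn
      rw [div_lt_iff₀ hε] at this
      linarith
    calc |x| * (Real.exp t / (1 + Real.exp t)) ≤ |x| * 1 :=
          mul_le_mul_of_nonneg_left (sig_le_one t) (abs_nonneg x)
      _ = |x| := mul_one _
      _ ≤ 1 / ρ n := hx
      _ < ε := h1
  · -- b > 0
    have hm : max 0 b = b := max_eq_right hb.le
    have hexp : Tendsto (fun n => Real.exp (1 - ρ n * b)) atTop (nhds 0) := by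
      apply Real.tendsto_exp_atBot.comp
      have h1 : Tendsto (fun n => ρ n * b) atTop atTop := hρ_top.atTop_mul_const hb
      exact tendsto_atBot_add_const_left _ 1 (tendsto_neg_atBot_iff.2 h1 |>.congr (fun n => rfl)) |>.congr (fun n => by ring)
    have hB : Tendsto (fun n => 1 / ρ n + b * Real.exp (1 - ρ n * b)) atTop (nhds 0) := by
      have := hinv.add ((tendsto_const_nhds (x := b)).mul hexp)
      simpa using this
    filter_upwards [hB.eventually (gt_mem_nhds hε)] with n hBn x hy
    set t := ρ n * x with ht
    have hρn := hρ_pos n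
    have hxb : |x - b| ≤ 1 / ρ n := by
      rw [le_div_iff₀ hρn]
      calc |x - b| * ρ n = |ρ n * (x - b)| := by
            rw [abs_mul, abs_of_pos hρn]; ring
        _ ≤ 1 := hy.le
    have htge : ρ n * b - 1 ≤ t := by
      have : -(ρ n * (x - b)) ≤ |ρ n * (x - b)| := neg_le_abs _
      have := this.trans hy.le
      nlinarith
    have hexpt : Real.exp (-t) ≤ Real.exp (1 - ρ n * b) :=
      Real.exp_le_exp.2 (by linarith)
    rw [hm, mul_div_assoc]
    set s := Real.exp t / (1 + Real.exp t) with hs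
    have hs0 := sig_nonneg t
    have hs1 := sig_le_one t
    have hs2 := one_sub_sig_le t
    have hdecomp : x * s - b = (x - b) * s - b * (1 - s) := by ring
    rw [hdecomp]
    calc |(x - b) * s - b * (1 - s)| ≤ |(x - b) * s| + |b * (1 - s)| := abs_sub _ _
      _ = |x - b| * s + b * (1 - s) := by
          rw [abs_mul, abs_mul, abs_of_nonneg hs0, abs_of_pos hb,
            abs_of_nonneg (by linarith : (0:ℝ) ≤ 1 - s)]
      _ ≤ 1 / ρ n + b * Real.exp (1 - ρ n * b) := by
          have h1 : |x - b| * s ≤ 1 / ρ n := by nlinarith [abs_nonneg (x - b)]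
          have h2 : b * (1 - s) ≤ b * Real.exp (1 - ρ n * b) := by nlinarith
          linarith
      _ < ε := hBn

/-- Lemma 2: if the smoothing parameter `ρ_n → ∞` grows slowly enough that
`ρ_n (b̂_n - b) → 0` in probability, then the smoothed breakdown frontier
estimator `b̂_n e^{ρ_n b̂_n}/(1 + e^{ρ_n b̂_n})` converges in probability to the
constant `max 0 b`. -/
theorem stmt_16 {Ω : Type*} [MeasurableSpace Ω] (P : Measure Ω)
    [IsProbabilityMeasure P] (b : ℝ) (ρ : ℕ → ℝ) (hρ_pos : ∀ n, 0 < ρ n)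
    (hρ_top : Tendsto ρ atTop atTop) (bhat : ℕ → Ω → ℝ)
    (hmeas : ∀ n, Measurable (bhat n))
    (hslow : TendstoInMeasure P (fun n ω => ρ n * (bhat n ω - b)) atTop
      (fun _ => (0 : ℝ))) :
    TendstoInMeasure P
      (fun n ω =>
        bhat n ω * Real.exp (ρ n * bhat n ω) / (1 + Real.exp (ρ n * bhat n ω)))
      atTop (fun _ => max 0 b) := by
  rw [tendstoInMeasure_iff_dist] at hslow ⊢
  intro ε hε
  have hkey := key b ρ hρ_pos hρ_top hε
  have h1 := hslow 1 one_pos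
  refine tendsto_of_tendsto_of_tendsto_of_le_of_le' tendsto_const_nhds h1 ?_ ?_
  · exact Eventually.of_forall fun n => zero_le
  · filter_upwards [hkey] with n hn
    apply measure_mono
    intro ω hω
    simp only [Set.mem_setOf_eq, Real.dist_eq, sub_zero] at hω ⊢
    by_contra hcon
    push_neg at hcon
    exact absurd (hn (bhat n ω) hcon) (not_lt.2 hω)
end

section
/- Let a₁, a₂, a₃ ≥ 0 with a₂ + a₃ ≥ 1, let σ_v > 0, σ_e > 0, and μ, u ∈ ℝ. Set T := σ_e²·a₂ + σ_v²·a₃, M := (a₃·μ·σ_v² − a₂·u·σ_e² − a₁·σ_v²·σ_e²)/T, and S := σ_v·σ_e/√T. Then ∫₀^∞ exp(−a₁·e) · (2π σ_v²)^{−a₂/2} · exp(−a₂·(u+e)²/(2σ_v²)) · (2π σ_e²)^{−a₃/2} · (1 − Φ(−μ/σ_e))^{−a₃} · exp(−a₃·(e−μ)²/(2σ_e²)) de = [ S / ( σ_v^{a₂} · σ_e^{a₃} · (2π)^{(a₂+a₃−1)/2} · (1 − Φ(−μ/σ_e))^{a₃} ) ] · exp( −a₂·u²/(2σ_v²) − a₃·μ²/(2σ_e²)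 + M²/(2S²) ) · ( 1 − Φ(−M/S) ). -/
open MeasureTheory Set Real

/-- The standard normal cumulative distribution function
`Φ(x) = ∫_{-∞}^x (1/√(2π)) e^{-t²/2} dt`. -/
noncomputable def Phi (x : ℝ) : ℝ :=
  ∫ t in Iic x, (Real.sqrt (2 * π))⁻¹ * Real.exp (-t ^ 2 / 2)

namespace Stmt17Aux

lemma fun_eq : (fun t : ℝ => Real.exp (-t ^ 2 / 2)) = fun t => Real.exp (-(1/2 : ℝ) * t ^ 2) := by
  funext t; congr 1; ring

lemma integrable_g : Integrable (fun t : ℝ => Real.exp (-t ^ 2 / 2)) := by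
  rw [fun_eq]; exact integrable_exp_neg_mul_sq (by norm_num)

lemma integral_g : (∫ t : ℝ, Real.exp (-t ^ 2 / 2)) = Real.sqrt (2 * π) := by
  rw [fun_eq, integral_gaussian]
  congr 1; ring

lemma Phi_eq (x : ℝ) :
    Phi x = (Real.sqrt (2 * π))⁻¹ * ∫ t in Iic x, Real.exp (-t ^ 2 / 2) := by
  unfold Phi; rw [integral_const_mul]

lemma integral_Ioi_g (y : ℝ) :
    ∫ t in Ioi y, Real.exp (-t ^ 2 / 2) = Real.sqrt (2 * π) * (1 - Phi y) := by
  have h := intervalIntegral.integral_Iic_add_Ioi (b := y) integrable_g.integrableOn integrable_g.integrableOn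
  rw [integral_g] at h
  have hs : (0:ℝ) < Real.sqrt (2 * π) := Real.sqrt_pos.2 (by positivity)
  have h2 : Real.sqrt (2 * π) * (1 - Phi y)
      = Real.sqrt (2 * π) - ∫ t in Iic y, Real.exp (-t ^ 2 / 2) := by
    rw [Phi_eq]; field_simp
  rw [h2]; linarith

lemma one_sub_Phi_pos (y : ℝ) : 0 < 1 - Phi y := by
  have h : 0 < ∫ t in Ioi y, Real.exp (-t ^ 2 / 2) := by
    rw [setIntegral_pos_iff_support_of_nonneg_ae
      (Filter.Eventually.of_forall fun t => (Real.exp_pos _).le) integrable_g.integrableOn]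
    have hsup : Function.support (fun t : ℝ => Real.exp (-t ^ 2 / 2)) = univ := by
      ext t; simp [Real.exp_ne_zero]
    rw [hsup, univ_inter, Real.volume_Ioi]
    simp
  have hs : (0:ℝ) < Real.sqrt (2 * π) := Real.sqrt_pos.2 (by positivity)
  rw [integral_Ioi_g y] at h
  nlinarith

lemma integral_comp_add_right_Ioi (f : ℝ → ℝ) (a c : ℝ) :
    ∫ x in Ioi a, f (x + c) = ∫ x in Ioi (a + c), f x := by
  rw [← integral_indicator measurableSet_Ioi, ← integral_indicator measurableSet_Ioi,
    ← integral_add_right_eq_self ((Ioi (a + c)).indicator f) c]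
  congr 1
  funext x
  by_cases h : a < x
  · rw [indicator_of_mem (mem_Ioi.2 h), indicator_of_mem (mem_Ioi.2 (by linarith))]
  · rw [indicator_of_notMem (by simpa using h),
      indicator_of_notMem (by simp [mem_Ioi]; linarith [le_of_not_gt h])]

lemma gauss_Ioi (M S : ℝ) (hS : 0 < S) :
    ∫ e in Ioi (0:ℝ), Real.exp (-(e - M) ^ 2 / (2 * S ^ 2))
      = Real.sqrt (2 * π) * S * (1 - Phi (-M / S)) := by
  have hS2 : S ^ 2 ≠ 0 := by positivity
  calc ∫ e in Ioi (0:ℝ), Real.exp (-(e - M) ^ 2 / (2 * S ^ 2))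
      = ∫ x in Ioi ((0:ℝ) + -M), Real.exp (-x ^ 2 / (2 * S ^ 2)) := by
        rw [← integral_comp_add_right_Ioi (fun x => Real.exp (-x ^ 2 / (2 * S ^ 2))) 0 (-M)]
        refine setIntegral_congr_fun measurableSet_Ioi fun e _ => ?_
        simp [sub_eq_add_neg]
    _ = S * ∫ x in Ioi (((0:ℝ) + -M) * S⁻¹), Real.exp (-x ^ 2 / 2) := by
        have h := integral_comp_mul_right_Ioi (fun t => Real.exp (-t ^ 2 / 2)) (0 + -M)
          (inv_pos.2 hS)
        simp only [smul_eq_mul, inv_inv] at h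
        rw [← h]
        refine setIntegral_congr_fun measurableSet_Ioi fun x _ => ?_
        rw [Real.exp_eq_exp]
        field_simp
    _ = Real.sqrt (2 * π) * S * (1 - Phi (-M / S)) := by
        have : ((0:ℝ) + -M) * S⁻¹ = -M / S := by ring
        rw [this, integral_Ioi_g]; ring

end Stmt17Aux

/-- Master Gaussian integral identity of Lemma A (Appendix: Normal–truncated
Normal integrals), from which the closed forms of all the `Δ₁`, `Δ₂`
objects of the Normal–Truncated Normal stochastic frontier model follow by
choosing `(a₁, a₂, a₃) ∈ {0,1}³`. -/
theorem stmt_17 (a₁ a₂ a₃ : ℝ) (ha₁ : 0 ≤ a₁) (ha₂ : 0 ≤ a₂) (ha₃ : 0 ≤ a₃)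
    (ha : 1 ≤ a₂ + a₃) (σv σe : ℝ) (hσv : 0 < σv) (hσe : 0 < σe) (μ u : ℝ) :
    ∫ e in Ioi (0:ℝ),
        Real.exp (-a₁ * e)
          * (2 * π * σv ^ 2) ^ (-(a₂ / 2))
          * Real.exp (-a₂ * (u + e) ^ 2 / (2 * σv ^ 2))
          * (2 * π * σe ^ 2) ^ (-(a₃ / 2))
          * (1 - Phi (-μ / σe)) ^ (-a₃)
          * Real.exp (-a₃ * (e - μ) ^ 2 / (2 * σe ^ 2))
      = (σv * σe / Real.sqrt (σe ^ 2 * a₂ + σv ^ 2 * a₃))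
          / (σv ^ a₂ * σe ^ a₃ * (2 * π) ^ ((a₂ + a₃ - 1) / 2)
              * (1 - Phi (-μ / σe)) ^ a₃)
        * Real.exp (-a₂ * u ^ 2 / (2 * σv ^ 2) - a₃ * μ ^ 2 / (2 * σe ^ 2)
            + ((a₃ * μ * σv ^ 2 - a₂ * u * σe ^ 2 - a₁ * σv ^ 2 * σe ^ 2)
                / (σe ^ 2 * a₂ + σv ^ 2 * a₃)) ^ 2
              / (2 * (σv * σe / Real.sqrt (σe ^ 2 * a₂ + σv ^ 2 * a₃)) ^ 2))
        * (1 - Phi (-((a₃ * μ * σv ^ 2 - a₂ * u * σe ^ 2 - a₁ * σv ^ 2 * σe ^ 2)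
                / (σe ^ 2 * a₂ + σv ^ 2 * a₃))
              / (σv * σe / Real.sqrt (σe ^ 2 * a₂ + σv ^ 2 * a₃)))) := by
  have hP : 0 < 1 - Phi (-μ / σe) := Stmt17Aux.one_sub_Phi_pos _
  have hT0 : 0 < σe ^ 2 * a₂ + σv ^ 2 * a₃ := by
    rcases lt_or_ge 0 a₂ with h | h
    · nlinarith [pow_pos hσe 2, pow_pos hσv 2,
        mul_nonneg (le_of_lt (pow_pos hσv 2)) ha₃]
    · have h2 : a₂ = 0 := le_antisymm h ha₂
      nlinarith [pow_pos hσv 2]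
  set T := σe ^ 2 * a₂ + σv ^ 2 * a₃ with hTdef
  set Mv := (a₃ * μ * σv ^ 2 - a₂ * u * σe ^ 2 - a₁ * σv ^ 2 * σe ^ 2) / T with hMdef
  set Sv := σv * σe / Real.sqrt T with hSdef
  have hS : 0 < Sv := div_pos (mul_pos hσv hσe) (Real.sqrt_pos.2 hT0)
  have hS2 : Sv ^ 2 = σv ^ 2 * σe ^ 2 / T := by
    rw [hSdef, div_pow, mul_pow, Real.sq_sqrt hT0.le]
  have key : EqOn (fun e : ℝ => Real.exp (-a₁ * e) * (2 * π * σv ^ 2) ^ (-(a₂ / 2))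
        * Real.exp (-a₂ * (u + e) ^ 2 / (2 * σv ^ 2)) * (2 * π * σe ^ 2) ^ (-(a₃ / 2))
        * (1 - Phi (-μ / σe)) ^ (-a₃) * Real.exp (-a₃ * (e - μ) ^ 2 / (2 * σe ^ 2)))
      (fun e : ℝ => ((2 * π * σv ^ 2) ^ (-(a₂ / 2)) * (2 * π * σe ^ 2) ^ (-(a₃ / 2))
          * (1 - Phi (-μ / σe)) ^ (-a₃)
          * Real.exp (-a₂ * u ^ 2 / (2 * σv ^ 2) - a₃ * μ ^ 2 / (2 * σe ^ 2)
              + Mv ^ 2 / (2 * Sv ^ 2)))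
        * Real.exp (-(e - Mv) ^ 2 / (2 * Sv ^ 2))) (Ioi 0) := by
    intro e _
    have hexp : Real.exp (-a₁ * e) * Real.exp (-a₂ * (u + e) ^ 2 / (2 * σv ^ 2))
        * Real.exp (-a₃ * (e - μ) ^ 2 / (2 * σe ^ 2))
        = Real.exp (-a₂ * u ^ 2 / (2 * σv ^ 2) - a₃ * μ ^ 2 / (2 * σe ^ 2)
            + Mv ^ 2 / (2 * Sv ^ 2)) * Real.exp (-(e - Mv) ^ 2 / (2 * Sv ^ 2)) := by
      rw [← Real.exp_add, ← Real.exp_add, ← Real.exp_add, Real.exp_eq_exp, hS2, hMdef, hTdef]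
      have hT0' : a₂ * σe ^ 2 + σv ^ 2 * a₃ ≠ 0 := by rw [mul_comm a₂]; exact hT0.ne'
      field_simp
      ring
    simp only
    linear_combination ((2 * π * σv ^ 2) ^ (-(a₂ / 2)) * (2 * π * σe ^ 2) ^ (-(a₃ / 2))
      * (1 - Phi (-μ / σe)) ^ (-a₃)) * hexp
  rw [setIntegral_congr_fun measurableSet_Ioi key, integral_const_mul,
    Stmt17Aux.gauss_Ioi Mv Sv hS]
  have h2π : (0:ℝ) < 2 * π := by positivity
  have hσv2 : (2 * π * σv ^ 2 : ℝ) ^ (-(a₂ / 2)) = ((2 * π) ^ (a₂ / 2))⁻¹ * (σv ^ a₂)⁻¹ := by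
    rw [Real.mul_rpow (by positivity) (by positivity)]
    congr 1
    · rw [Real.rpow_neg h2π.le]
    · rw [← Real.rpow_natCast σv 2, ← Real.rpow_mul hσv.le,
        show ((2:ℕ):ℝ) * -(a₂ / 2) = -a₂ by push_cast; ring, Real.rpow_neg hσv.le]
  have hσe2 : (2 * π * σe ^ 2 : ℝ) ^ (-(a₃ / 2)) = ((2 * π) ^ (a₃ / 2))⁻¹ * (σe ^ a₃)⁻¹ := by
    rw [Real.mul_rpow (by positivity) (by positivity)]
    congr 1
    · rw [Real.rpow_neg h2π.le]
    · rw [← Real.rpow_natCast σe 2, ← Real.rpow_mul hσe.le,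
        show ((2:ℕ):ℝ) * -(a₃ / 2) = -a₃ by push_cast; ring, Real.rpow_neg hσe.le]
  rw [hσv2, hσe2, Real.rpow_neg hP.le, Real.sqrt_eq_rpow]
  clear_value T Mv Sv
  generalize (1 - Phi (-Mv / Sv)) = X
  generalize Real.exp (-a₂ * u ^ 2 / (2 * σv ^ 2) - a₃ * μ ^ 2 / (2 * σe ^ 2)
      + Mv ^ 2 / (2 * Sv ^ 2)) = E
  have hsplit : (2 * π : ℝ) ^ ((1:ℝ) / 2) * (2 * π) ^ ((a₂ + a₃ - 1) / 2)
      = (2 * π) ^ (a₂ / 2) * (2 * π) ^ (a₃ / 2) := by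
    rw [← Real.rpow_add h2π, ← Real.rpow_add h2π]
    congr 1; ring
  have n1 : ((2 * π : ℝ) ^ (a₂ / 2)) ≠ 0 := (Real.rpow_pos_of_pos h2π _).ne'
  have n2 : ((2 * π : ℝ) ^ (a₃ / 2)) ≠ 0 := (Real.rpow_pos_of_pos h2π _).ne'
  have n3 : ((2 * π : ℝ) ^ ((a₂ + a₃ - 1) / 2)) ≠ 0 := (Real.rpow_pos_of_pos h2π _).ne'
  have n4 : (σv ^ a₂ : ℝ) ≠ 0 := (Real.rpow_pos_of_pos hσv _).ne'
  have n5 : (σe ^ a₃ : ℝ) ≠ 0 := (Real.rpow_pos_of_pos hσe _).ne'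
  have n6 : ((1 - Phi (-μ / σe)) ^ a₃ : ℝ) ≠ 0 := (Real.rpow_pos_of_pos hP _).ne'
  rw [neg_div] at n6 ⊢
  field_simp
  linear_combination (E * X) * hsplit
end

section
/- Let σ_v > 0, σ_e > 0, and μ, u ∈ ℝ. Set m := (μ·σ_v² − u·σ_e²)/(σ_v² + σ_e²) and s := σ_v·σ_e/√(σ_v² + σ_e²). Then ∫₀^∞ (1/√(2π σ_v²)) · exp( −(u+e)²/(2σ_v²) ) · (1/√(2π σ_e²)) · ( exp( −(e−μ)²/(2σ_e²) ) / (1 − Φ(−μ/σ_e)) ) de = [ s / ( σ_v·σ_e·√(2π)·(1 − Φ(−μ/σ_e)) ) ] · exp( −u²/(2σ_v²) − μ²/(2σ_e²) + m²/(2s²) ) · ( 1 − Φ(−m/s) ). -/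
open MeasureTheory Set Real

lemma integral_Ioi_comp_add_right (f : ℝ → ℝ) (a c : ℝ) :
    ∫ x in Ioi a, f (x + c) = ∫ x in Ioi (a + c), f x := by
  rw [← integral_indicator measurableSet_Ioi, ← integral_indicator measurableSet_Ioi,
    ← integral_add_right_eq_self (fun x => (Ioi (a + c)).indicator f x) c]
  congr 1
  ext x
  by_cases h : a < x
  · rw [indicator_of_mem (mem_Ioi.2 h), indicator_of_mem (mem_Ioi.2 (by linarith))]
  · rw [indicator_of_notMem (fun hc => h (mem_Ioi.1 hc)),
      indicator_of_notMem (fun hc => h (by have := mem_Ioi.1 hc; linarith))]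

lemma gauss_integrable : Integrable (fun y : ℝ => Real.exp (-y ^ 2 / 2)) := by
  have h := integrable_exp_neg_mul_sq (by norm_num : (0:ℝ) < 1/2)
  refine h.congr ?_
  filter_upwards with x
  ring_nf

lemma gauss_total : ∫ y : ℝ, Real.exp (-y ^ 2 / 2) = Real.sqrt (2 * π) := by
  have h := integral_gaussian (1/2)
  rw [show π / (1/2) = 2 * π by ring] at h
  rw [← h]
  congr 1; ext x; ring_nf

lemma gauss_tail (c : ℝ) :
    ∫ y in Ioi c, Real.exp (-y ^ 2 / 2) = Real.sqrt (2 * π) * (1 - Phi c) := by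
  have h2π : (0:ℝ) < Real.sqrt (2 * π) := Real.sqrt_pos.mpr (by positivity)
  have hPhi : Phi c = (Real.sqrt (2 * π))⁻¹ * ∫ y in Iic c, Real.exp (-y ^ 2 / 2) := by
    rw [Phi, integral_const_mul]
  have hsplit := intervalIntegral.integral_Iic_add_Ioi (b := c) (μ := volume)
    gauss_integrable.integrableOn gauss_integrable.integrableOn
  rw [gauss_total] at hsplit
  rw [hPhi, mul_sub, mul_one, ← mul_assoc, mul_inv_cancel₀ h2π.ne', one_mul]
  linarith

lemma Phi_lt_one (c : ℝ) : Phi c < 1 := by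
  have h2π : (0:ℝ) < Real.sqrt (2 * π) := Real.sqrt_pos.mpr (by positivity)
  have hpos : 0 < ∫ y in Ioi c, Real.exp (-y ^ 2 / 2) := by
    rw [setIntegral_pos_iff_support_of_nonneg_ae]
    · have : Function.support (fun y : ℝ => Real.exp (-y ^ 2 / 2)) = univ := by
        ext y; simp [Function.support, (Real.exp_pos _).ne']
      rw [this, univ_inter]
      exact Measure.measure_Ioi_pos _ c
    · filter_upwards with x using (Real.exp_pos _).le
    · exact gauss_integrable.integrableOn
  rw [gauss_tail] at hpos
  nlinarith

lemma gauss_Ioi (m s : ℝ) (hs : 0 < s) :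
    ∫ e in Ioi (0:ℝ), Real.exp (-(e - m) ^ 2 / (2 * s ^ 2))
      = s * Real.sqrt (2 * π) * (1 - Phi (-m / s)) := by
  have h1 : ∫ e in Ioi (0:ℝ), Real.exp (-(e - m) ^ 2 / (2 * s ^ 2))
      = ∫ x in Ioi (0 + -m), Real.exp (-x ^ 2 / (2 * s ^ 2)) := by
    simp_rw [sub_eq_add_neg]
    exact integral_Ioi_comp_add_right (fun x => Real.exp (-x ^ 2 / (2 * s ^ 2))) 0 (-m)
  have h2 : ∀ x : ℝ, Real.exp (-x ^ 2 / (2 * s ^ 2)) = Real.exp (-(s⁻¹ * x) ^ 2 / 2) := by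
    intro x
    congr 1
    rw [mul_pow, ← neg_mul]
    rw [div_eq_div_iff (by positivity) (by norm_num)]
    field_simp
  rw [h1]
  simp_rw [h2]
  rw [integral_comp_mul_left_Ioi (fun y => Real.exp (-y ^ 2 / 2)) _ (inv_pos.mpr hs)]
  rw [gauss_tail, smul_eq_mul, inv_inv]
  rw [show s⁻¹ * (0 + -m) = -m / s by field_simp; ring]
  ring

/-- Closed form of `Δ₂(u; σ_v, σ_e, μ) = ∫₀^∞ f_{v|e}(u+e|e; θ_v) f_e(e; θ_e) de`
from Lemma A, where `f_{v|e}(·|e; θ_v)` is the `N(0, σ_v²)` density and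
`f_e(·; θ_e)` is the `N(μ, σ_e²)` density truncated to `[0, ∞)`. -/
theorem stmt_19 (σv σe : ℝ) (hσv : 0 < σv) (hσe : 0 < σe) (μ u : ℝ) :
    ∫ e in Ioi (0:ℝ),
        (1 / Real.sqrt (2 * π * σv ^ 2)) * Real.exp (-(u + e) ^ 2 / (2 * σv ^ 2))
          * ((1 / Real.sqrt (2 * π * σe ^ 2))
              * (Real.exp (-(e - μ) ^ 2 / (2 * σe ^ 2)) / (1 - Phi (-μ / σe))))
      = (σv * σe / Real.sqrt (σv ^ 2 + σe ^ 2))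
          / (σv * σe * Real.sqrt (2 * π) * (1 - Phi (-μ / σe)))
        * Real.exp (-u ^ 2 / (2 * σv ^ 2) - μ ^ 2 / (2 * σe ^ 2)
            + ((μ * σv ^ 2 - u * σe ^ 2) / (σv ^ 2 + σe ^ 2)) ^ 2
              / (2 * (σv * σe / Real.sqrt (σv ^ 2 + σe ^ 2)) ^ 2))
        * (1 - Phi (-((μ * σv ^ 2 - u * σe ^ 2) / (σv ^ 2 + σe ^ 2))
              / (σv * σe / Real.sqrt (σv ^ 2 + σe ^ 2)))) := by
  have hS : (0:ℝ) < σv ^ 2 + σe ^ 2 := by positivity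
  have hsqrtS : 0 < Real.sqrt (σv ^ 2 + σe ^ 2) := Real.sqrt_pos.mpr hS
  have h2π : (0:ℝ) < Real.sqrt (2 * π) := Real.sqrt_pos.mpr (by positivity)
  set T := 1 - Phi (-μ / σe) with hT
  have hTpos : 0 < T := by rw [hT]; linarith [Phi_lt_one (-μ / σe)]
  set m := (μ * σv ^ 2 - u * σe ^ 2) / (σv ^ 2 + σe ^ 2) with hm
  set s := σv * σe / Real.sqrt (σv ^ 2 + σe ^ 2) with hs
  have hspos : 0 < s := by rw [hs]; positivity
  have hs2 : s ^ 2 = σv ^ 2 * σe ^ 2 / (σv ^ 2 + σe ^ 2) := by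
    rw [hs, div_pow, sq_sqrt hS.le, mul_pow]
  set E0 := -u ^ 2 / (2 * σv ^ 2) - μ ^ 2 / (2 * σe ^ 2) + m ^ 2 / (2 * s ^ 2) with hE0
  have hpt : ∀ e : ℝ,
      (1 / Real.sqrt (2 * π * σv ^ 2)) * Real.exp (-(u + e) ^ 2 / (2 * σv ^ 2))
        * ((1 / Real.sqrt (2 * π * σe ^ 2))
            * (Real.exp (-(e - μ) ^ 2 / (2 * σe ^ 2)) / T))
      = (1 / Real.sqrt (2 * π * σv ^ 2) * (1 / Real.sqrt (2 * π * σe ^ 2)) / T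
          * Real.exp E0) * Real.exp (-(e - m) ^ 2 / (2 * s ^ 2)) := by
    intro e
    have hexp : -(u + e) ^ 2 / (2 * σv ^ 2) + -(e - μ) ^ 2 / (2 * σe ^ 2)
        = E0 + -(e - m) ^ 2 / (2 * s ^ 2) := by
      rw [hE0, hs2, hm]
      field_simp
      ring
    have hmul : Real.exp (-(u + e) ^ 2 / (2 * σv ^ 2))
          * Real.exp (-(e - μ) ^ 2 / (2 * σe ^ 2))
        = Real.exp E0 * Real.exp (-(e - m) ^ 2 / (2 * s ^ 2)) := by
      rw [← Real.exp_add, ← Real.exp_add, hexp]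
    linear_combination
      (1 / Real.sqrt (2 * π * σv ^ 2) * (1 / Real.sqrt (2 * π * σe ^ 2)) / T) * hmul
  simp_rw [hpt]
  rw [integral_const_mul, gauss_Ioi m s hspos]
  have hc1 : Real.sqrt (2 * π * σv ^ 2) = Real.sqrt (2 * π) * σv := by
    rw [Real.sqrt_mul (by positivity), Real.sqrt_sq hσv.le]
  have hc2 : Real.sqrt (2 * π * σe ^ 2) = Real.sqrt (2 * π) * σe := by
    rw [Real.sqrt_mul (by positivity), Real.sqrt_sq hσe.le]
  rw [hc1, hc2]
  field_simp
end
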